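/- arXiv:2306.03435 — 3 statements merged into one kernel-verified Lean document; each statement's English description precedes it below -/
import Mathlib

section
/- Under the discrete contextual dataset model (z_t ≡ 0) in which (δ^q, δ^w) equals (0,0) or (Δ,−Δ) each with probability 1/2, with Δ > √(ζ/(1−ζ)), for every choice of parameters w, q ∈ ℝ^d, the linear-attention model achieves at most 75% accuracy: P(y·f^lin-att(w,q)(X) ≤ 0) ≥ 1/4. -/
open MeasureTheory ProbabilityTheory Finset Filter

noncomputable section

/-- `d`-dimensional Euclidean space. -/
abbrev E (d : ℕ) : Type := EuclideanSpace ℝ (Fin d)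

/-- Real inner product. -/
def ip {d : ℕ} (x y : E d) : ℝ := inner ℝ x y

/-- Softmax over `Fin T`. -/
def softmax {T : ℕ} (v : Fin T → ℝ) : Fin T → ℝ :=
  fun t => Real.exp (v t) / ∑ s, Real.exp (v s)

/-- Prompt-attention model `f^att_{(w,q)}(X) = wᵀ Xᵀ φ(X q)`. -/
def promptAtt {T d : ℕ} (w q : E d) (X : Fin T → E d) : ℝ :=
  ∑ t, softmax (fun s => ip (X s) q) t * ip (X t) w

/-- Tokens of the contextual data model: `x_t = q★ + y•w★` on the relevance set `R`,
and `x_t = -δq•q★ - δw·y•w★ + z_t` off it. -/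
def tokens {T d : ℕ} (R : Finset (Fin T)) (qs ws : E d) (y δq δw : ℝ)
    (z : Fin T → E d) : Fin T → E d :=
  fun t => if t ∈ R then qs + y • ws else -(δq • qs) - (δw * y) • ws + z t

/-- Projection of `x` orthogonally to `a`:  `(I - āāᵀ) x`. -/
def projPerp {d : ℕ} (a x : E d) : E d := x - (ip a x / ‖a‖ ^ 2) • a

/-- Linear-attention model `f^lin-att(w,q)(X) = wᵀ Xᵀ X q / T`. -/
def linAtt {T d : ℕ} (w q : E d) (X : Fin T → E d) : ℝ :=
  (1 / (T : ℝ)) * ∑ t, ip (X t) w * ip (X t) q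

/-!
Write `a_v = ⟪q★, v⟫` and `b_v = ⟪w★, v⟫`. On the discrete model `f^lin-att` is
`ζ (a_w + y b_w)(a_q + y b_q) + (1 - ζ) δ² (y b_w - a_w)(y b_q - a_q)`, so with
`P = (a_w + b_w)(a_q + b_q)` and `M = (a_w - b_w)(a_q - b_q)` the four atoms are classified
correctly exactly when `ζP > 0`, `ζM < 0`, `ζP + cM > 0` and `ζM + cP < 0`, where
`c = (1 - ζ)Δ² > ζ`. The first two give `P > M`, the last two `(c - ζ)(P - M) < 0`.
So some atom, of probability `1/4`, is misclassified.
-/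

theorem linAtt_ite {T d : ℕ} (R : Finset (Fin T)) (u v w q : E d) :
    linAtt w q (fun t => if t ∈ R then u else v) =
      (#R / T : ℝ) * (ip u w * ip u q) + ((T - #R) / T : ℝ) * (ip v w * ip v q) := by
  have hcompl : (#Rᶜ : ℝ) = T - #R := by
    rw [card_compl, Fintype.card_fin,
      Nat.cast_sub (card_le_univ R |>.trans_eq (Fintype.card_fin T))]
  simp only [linAtt, apply_ite (fun x => ip x w * ip x q), sum_ite, filter_mem_eq_inter,
    univ_inter, filter_not, sum_const, nsmul_eq_mul]
  rw [← compl_eq_univ_sdiff, hcompl]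
  ring

theorem tokens_discrete {T d : ℕ} (R : Finset (Fin T)) (qs ws : E d) (y δ : ℝ) :
    tokens R qs ws y δ (-δ) (fun _ => 0) =
      fun t => if t ∈ R then qs + y • ws else δ • (y • ws - qs) := by
  funext t
  unfold tokens
  split_ifs
  · rfl
  · module

theorem linAtt_tokens_discrete {T d : ℕ} (hT : 0 < T) {ζ : ℝ} {R : Finset (Fin T)}
    (hR : (#R : ℝ) = ζ * T) (qs ws w q : E d) (y δ : ℝ) :
    linAtt w q (tokens R qs ws y δ (-δ) fun _ => 0) =
      ζ * ((ip qs w + y * ip ws w) * (ip qs q + y * ip ws q)) +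
        (1 - ζ) * δ ^ 2 * ((y * ip ws w - ip qs w) * (y * ip ws q - ip qs q)) := by
  have hT' : (T : ℝ) ≠ 0 := by positivity
  rw [tokens_discrete, linAtt_ite, hR]
  simp only [ip, inner_add_left, inner_sub_left, real_inner_smul_left]
  field_simp

theorem exists_misclassified_discrete {ζ κ Δ : ℝ} (hζ : 0 < ζ) (hζΔ : ζ < κ * Δ ^ 2)
    (aw bw aq bq : ℝ) :
    ∃ y ∈ ({-1, 1} : Finset ℝ), ∃ δ ∈ ({0, Δ} : Finset ℝ),
      y * (ζ * ((aw + y * bw) * (aq + y * bq)) + κ * δ ^ 2 * ((y * bw - aw) * (y * bq - aq)))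
        ≤ 0 := by
  by_contra! h
  simp only [mem_insert, mem_singleton, forall_eq_or_imp, forall_eq] at h
  obtain ⟨⟨hneg0, hnegΔ⟩, hpos0, hposΔ⟩ := h
  set P := (aw + bw) * (aq + bq)
  set M := (aw - bw) * (aq - bq)
  have hP : 0 < ζ * P := by linarith
  have hM : ζ * M < 0 := by linarith
  have hPΔ : 0 < ζ * P + κ * Δ ^ 2 * M := by linarith
  have hMΔ : ζ * M + κ * Δ ^ 2 * P < 0 := by linarith
  have hMP : M < P := by nlinarith
  nlinarith [mul_pos (sub_pos.2 hζΔ) (sub_pos.2 hMP)]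

theorem one_le_sum_sum_ite_of_exists {α β R : Type*} [Semiring R] [PartialOrder R]
    [IsOrderedRing R] {s : Finset α} {t : Finset β} {p : α → β → Prop}
    [∀ a b, Decidable (p a b)] (h : ∃ a ∈ s, ∃ b ∈ t, p a b) :
    (1 : R) ≤ ∑ a ∈ s, ∑ b ∈ t, if p a b then 1 else 0 := by
  obtain ⟨a, ha, b, hb, hab⟩ := h
  have hnonneg : ∀ a b, (0 : R) ≤ if p a b then 1 else 0 := fun _ _ => by split_ifs <;> simp
  calc (1 : R) = if p a b then 1 else 0 := by rw [if_pos hab]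
    _ ≤ ∑ b ∈ t, if p a b then 1 else 0 := single_le_sum (fun b _ => hnonneg a b) hb
    _ ≤ ∑ a ∈ s, ∑ b ∈ t, if p a b then 1 else 0 :=
      single_le_sum (f := fun a => ∑ b ∈ t, if p a b then (1 : R) else 0)
        (fun a _ => sum_nonneg fun b _ => hnonneg a b) ha

/-- Theorem 1, part 3: failure of linear attention on the discrete
contextual data model with `(δ^q,δ^w) ∈ {(0,0),(Δ,-Δ)}` equally likely,
`Δ > √(ζ/(1-ζ))`.  The misclassification probability, i.e. the average over the four
equally likely atoms `y ∈ {-1,1}`, `δ ∈ {0,Δ}` of the indicator of `y·f ≤ 0`, is at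
least `1/4`; equivalently, accuracy is at most 75%. -/
theorem linear_attention_failure
    {T d : ℕ} (hT : 0 < T) (ζ : ℝ) (hζ0 : 0 < ζ) (hζ1 : ζ < 1)
    (qs ws : E d) (Δ : ℝ) (hΔ : Real.sqrt (ζ / (1 - ζ)) < Δ)
    (R : Finset (Fin T)) (hR : (R.card : ℝ) = ζ * T)
    (w q : E d) :
    (1 : ℝ) / 4 ≤
      (∑ y ∈ ({-1, 1} : Finset ℝ), ∑ δ ∈ ({0, Δ} : Finset ℝ),
          if y * linAtt w q (tokens R qs ws y δ (-δ) fun _ => 0) ≤ 0 then (1 : ℝ) else 0)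
        / 4 := by
  have hΔ0 : 0 < Δ := (Real.sqrt_nonneg _).trans_lt hΔ
  have hζΔ : ζ < (1 - ζ) * Δ ^ 2 := by
    rwa [Real.sqrt_lt' hΔ0, div_lt_iff₀ (by linarith), mul_comm] at hΔ
  have hmis := exists_misclassified_discrete hζ0 hζΔ (ip qs w) (ip ws w) (ip qs q) (ip ws q)
  simp only [← linAtt_tokens_discrete hT hR] at hmis
  linarith [one_le_sum_sum_ite_of_exists (R := ℝ) hmis]
end
end

section
/- Under the core contextual dataset model, the negative empirical prompt-gradient at prompt q = 0 and head w satisfies, as an exact identity, Ĝ_q(0,w) = (1/n)Σ_{i=1}^n (y_i − ζ·α_i − β_i)·[ ((ζ − ζ²)·α_i − ζ·β_i)(q★ + y_i·w★) + Σ̂_i·w − (ζ·α_i + β_i)·γ_i ], where α_i = wᵀq★ + y_i·wᵀw★, γ_i = (1/T)Z_iᵀ1, β_i = γ_iᵀw, and Σ̂_i = (1/T)Z_iᵀZ_i. -/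
/-!
At `q = 0` the softmax is uniform, so the model output is the mean score `(1/T) Σₜ ⟪xₜ, w⟫`, and
since `φ'(0) = (1/T)I - (1/T²)𝟙𝟙ᵀ` its `q`-gradient is the empirical covariance
`(1/T) Σₜ ⟪xₜ, w⟫ xₜ - (mean score) • (mean token)`. In the data model a `ζ`-fraction of the tokens
equals `q★ + y w★` and the rest are noise, so the mean score is `ζα + β`, the mean token
`ζ (q★ + y w★) + γ` and the mean of `⟪xₜ, w⟫ xₜ` is `ζα (q★ + y w★) + Σ̂w`. The square loss
weights sample `i` by its residual `yᵢ - ζαᵢ - βᵢ`, and expanding the covariance gives the formula.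
-/


open MeasureTheory ProbabilityTheory Finset Filter

noncomputable section

/-- Empirical square loss of the prompt-attention model on `n` samples. -/
def Lhat {T d n : ℕ} (yv : Fin n → ℝ) (X : Fin n → Fin T → E d) (w q : E d) : ℝ :=
  (1 / (2 * (n : ℝ))) * ∑ i, (yv i - promptAtt w q (X i)) ^ 2

lemma hasFDerivAt_sum_exp_inner_mul {ι : Type*} [Fintype ι] {d : ℕ} (Y : ι → E d) (c : ι → ℝ) :
    HasFDerivAt (fun q : E d => ∑ t, Real.exp (ip (Y t) q) * c t)
      (∑ t, c t • innerSL ℝ (Y t)) 0 := by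
  refine HasFDerivAt.fun_sum fun t _ => ?_
  simpa [ip] using (((innerSL ℝ (Y t)).hasFDerivAt (x := 0)).exp).mul_const (c t)

lemma promptAtt_eq_mul_inv {T d : ℕ} (w q : E d) (Y : Fin T → E d) :
    promptAtt w q Y
      = (∑ t, Real.exp (ip (Y t) q) * ip (Y t) w) * (∑ t, Real.exp (ip (Y t) q) * 1)⁻¹ := by
  simp only [promptAtt, softmax, mul_one, Finset.sum_mul]
  exact Finset.sum_congr rfl fun t _ => by ring

lemma promptAtt_zero {T d : ℕ} (w : E d) (Y : Fin T → E d) :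
    promptAtt w 0 Y = (T : ℝ)⁻¹ • ∑ t, ip (Y t) w := by
  simp [promptAtt_eq_mul_inv, ip, mul_comm]

lemma hasGradientAt_promptAtt_zero {T d : ℕ} (hT : 0 < T) (w : E d) (Y : Fin T → E d) :
    HasGradientAt (fun q => promptAtt w q Y)
      ((T : ℝ)⁻¹ • ∑ t, ip (Y t) w • Y t
        - ((T : ℝ)⁻¹ • ∑ t, ip (Y t) w) • (T : ℝ)⁻¹ • ∑ t, Y t) 0 := by
  have hT' : (T : ℝ) ≠ 0 := Nat.cast_ne_zero.mpr hT.ne'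
  have hD := hasFDerivAt_sum_exp_inner_mul Y fun _ => 1
  have hD0 : ∑ t, Real.exp (ip (Y t) 0) * (1 : ℝ) = T := by simp [ip]
  have hDinv := (hD0 ▸ hasDerivAt_inv hT').comp_hasFDerivAt (0 : E d) hD
  have h := (hasFDerivAt_sum_exp_inner_mul Y fun t => ip (Y t) w).mul hDinv
  simp only [Function.comp_def] at h
  rw [hasGradientAt_iff_hasFDerivAt, funext fun q => promptAtt_eq_mul_inv w q Y]
  refine h.congr_fderiv ?_
  rw [hD0]
  ext v
  simp [ip]
  ring

lemma hasGradientAt_Lhat {T d n : ℕ} (yv : Fin n → ℝ) (X : Fin n → Fin T → E d) (w q₀ : E d)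
    {g : Fin n → E d} (hg : ∀ i, HasGradientAt (fun q => promptAtt w q (X i)) (g i) q₀) :
    HasGradientAt (fun q => Lhat yv X w q)
      (-((1 / (n : ℝ)) • ∑ i, (yv i - promptAtt w q₀ (X i)) • g i)) q₀ := by
  have hsq : ∀ i, HasFDerivAt (fun q => (yv i - promptAtt w q (X i)) ^ 2)
      (InnerProductSpace.toDual ℝ (E d) ((-2 * (yv i - promptAtt w q₀ (X i))) • g i)) q₀ := by
    intro i
    refine (((hg i).hasFDerivAt.const_sub (yv i)).pow 2).congr_fderiv ?_
    rw [map_smul]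
    module
  have h := (HasFDerivAt.fun_sum fun i (_ : i ∈ Finset.univ) => hsq i).const_mul
    (1 / (2 * (n : ℝ)))
  rw [hasGradientAt_iff_hasFDerivAt]
  refine h.congr_fderiv ?_
  simp only [← map_sum, ← map_smul]
  congr 1
  simp only [Finset.smul_sum, ← Finset.sum_neg_distrib, smul_smul]
  exact Finset.sum_congr rfl fun i _ => by module

section Tokens

variable {T d : ℕ} (R : Finset (Fin T)) (qs ws : E d) (y : ℝ) (z : Fin T → E d)

lemma sum_tokens {M : Type*} [AddCommMonoid M] (F : E d → M) :
    ∑ t, F (tokens R qs ws y 0 0 z t) = R.card • F (qs + y • ws) + ∑ t ∈ Rᶜ, F (z t) := by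
  rw [← Finset.sum_add_sum_compl R]
  congr 1
  · rw [Finset.sum_congr rfl fun t ht => by rw [tokens, if_pos ht], Finset.sum_const]
  · exact Finset.sum_congr rfl fun t ht => by simp [tokens, Finset.mem_compl.mp ht]

variable {R} {ζ : ℝ}

lemma inv_smul_sum_tokens {M : Type*} [AddCommGroup M] [Module ℝ M] (hT : 0 < T)
    (hR : (R.card : ℝ) = ζ * T) (F : E d → M) :
    (T : ℝ)⁻¹ • ∑ t, F (tokens R qs ws y 0 0 z t)
      = ζ • F (qs + y • ws) + (T : ℝ)⁻¹ • ∑ t ∈ Rᶜ, F (z t) := by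
  have hT' : (T : ℝ) ≠ 0 := Nat.cast_ne_zero.mpr hT.ne'
  rw [sum_tokens, smul_add, ← Nat.cast_smul_eq_nsmul ℝ, hR, mul_comm ζ, smul_smul,
    inv_mul_cancel_left₀ hT']

variable {w γ : E d}

lemma inv_smul_sum_inner_tokens (hT : 0 < T) (hR : (R.card : ℝ) = ζ * T)
    (hγ : γ = (1 / (T : ℝ)) • ∑ t ∈ Rᶜ, z t) :
    (T : ℝ)⁻¹ • ∑ t, ip (tokens R qs ws y 0 0 z t) w = ζ * ip (qs + y • ws) w + ip γ w := by
  rw [inv_smul_sum_tokens qs ws y z hT hR (ip · w), hγ]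
  simp [ip, real_inner_smul_left, sum_inner]

lemma promptAtt_zero_tokens (hT : 0 < T) (hR : (R.card : ℝ) = ζ * T)
    (hγ : γ = (1 / (T : ℝ)) • ∑ t ∈ Rᶜ, z t) :
    promptAtt w 0 (tokens R qs ws y 0 0 z) = ζ * ip (qs + y • ws) w + ip γ w := by
  rw [promptAtt_zero, inv_smul_sum_inner_tokens qs ws y z hT hR hγ]

lemma hasGradientAt_promptAtt_tokens_zero {Sw : E d} (hT : 0 < T) (hR : (R.card : ℝ) = ζ * T)
    (hγ : γ = (1 / (T : ℝ)) • ∑ t ∈ Rᶜ, z t)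
    (hSw : Sw = (1 / (T : ℝ)) • ∑ t ∈ Rᶜ, ip (z t) w • z t) :
    HasGradientAt (fun q => promptAtt w q (tokens R qs ws y 0 0 z))
      ((ζ * ip (qs + y • ws) w) • (qs + y • ws) + Sw
        - (ζ * ip (qs + y • ws) w + ip γ w) • (ζ • (qs + y • ws) + γ)) 0 := by
  have h := hasGradientAt_promptAtt_zero hT w (tokens R qs ws y 0 0 z)
  rwa [inv_smul_sum_tokens qs ws y z hT hR (fun x => ip x w • x),
    inv_smul_sum_tokens qs ws y z hT hR fun x => x,
    inv_smul_sum_inner_tokens qs ws y z hT hR hγ, smul_smul, ← one_div, ← hSw,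
    ← hγ] at h

end Tokens

theorem prompt_gradient_at_origin_general
    {T d n : ℕ} (hT : 0 < T)
    (ζ : ℝ)
    (qs ws : E d) (w : E d)
    (yv : Fin n → ℝ)
    (Rset : Fin n → Finset (Fin T)) (hR : ∀ i, ((Rset i).card : ℝ) = ζ * T)
    (z : Fin n → Fin T → E d)
    (X : Fin n → Fin T → E d)
    (hX : ∀ i, X i = tokens (Rset i) qs ws (yv i) 0 0 (z i))
    -- the quantities `γᵢ, αᵢ, βᵢ, Σ̂ᵢw` of the lemma:
    (γ : Fin n → E d) (hγ : ∀ i, γ i = (1 / (T : ℝ)) • ∑ t ∈ (Rset i)ᶜ, z i t)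
    (α : Fin n → ℝ) (hα : ∀ i, α i = ip w qs + yv i * ip w ws)
    (β : Fin n → ℝ) (hβ : ∀ i, β i = ip (γ i) w)
    (Sw : Fin n → E d)
    (hSw : ∀ i, Sw i = (1 / (T : ℝ)) • ∑ t ∈ (Rset i)ᶜ, ip (z i t) w • z i t) :
    -gradient (fun q => Lhat yv X w q) 0 =
      (1 / (n : ℝ)) • ∑ i,
        (yv i - ζ * α i - β i) •
          (((ζ - ζ ^ 2) * α i - ζ * β i) • (qs + yv i • ws)
            + Sw i - (ζ * α i + β i) • γ i) := by
  have hα' : ∀ i, α i = ip (qs + yv i • ws) w := fun i => by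
    rw [hα, ip, ip, ip, inner_add_left, real_inner_smul_left, real_inner_comm qs,
      real_inner_comm ws]
  have hg := fun i => hX i ▸
    hasGradientAt_promptAtt_tokens_zero qs ws (yv i) (z i) hT (hR i) (hγ i) (hSw i)
  rw [(hasGradientAt_Lhat yv X w 0 hg).gradient, neg_neg]
  congr 1
  refine Finset.sum_congr rfl fun i _ => ?_
  rw [hX i, promptAtt_zero_tokens qs ws (yv i) (z i) hT (hR i) (hγ i), ← hα' i, ← hβ i]
  module

/-- Lemma: exact formula for the negative empirical prompt-gradient at
prompt `q = 0` and head `w` under the core contextual dataset model. -/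
theorem prompt_gradient_at_origin
    {T d n : ℕ} (hT : 0 < T) (hn : 0 < n)
    (ζ : ℝ) (hζ0 : 0 < ζ) (hζ1 : ζ < 1)
    (qs ws : E d) (w : E d)
    (yv : Fin n → ℝ) (hy : ∀ i, yv i = 1 ∨ yv i = -1)
    (Rset : Fin n → Finset (Fin T)) (hR : ∀ i, ((Rset i).card : ℝ) = ζ * T)
    (z : Fin n → Fin T → E d)
    (X : Fin n → Fin T → E d)
    (hX : ∀ i, X i = tokens (Rset i) qs ws (yv i) 0 0 (z i))
    -- the quantities `γᵢ, αᵢ, βᵢ, Σ̂ᵢw` of the lemma: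
    (γ : Fin n → E d) (hγ : ∀ i, γ i = (1 / (T : ℝ)) • ∑ t ∈ (Rset i)ᶜ, z i t)
    (α : Fin n → ℝ) (hα : ∀ i, α i = ip w qs + yv i * ip w ws)
    (β : Fin n → ℝ) (hβ : ∀ i, β i = ip (γ i) w)
    (Sw : Fin n → E d)
    (hSw : ∀ i, Sw i = (1 / (T : ℝ)) • ∑ t ∈ (Rset i)ᶜ, ip (z i t) w • z i t) :
    -gradient (fun q => Lhat yv X w q) 0 =
      (1 / (n : ℝ)) • ∑ i,
        (yv i - ζ * α i - β i) •
          (((ζ - ζ ^ 2) * α i - ζ * β i) • (qs + yv i • ws)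
            + Sw i - (ζ * α i + β i) • γ i) :=
  prompt_gradient_at_origin_general hT ζ qs ws w yv Rset hR z X hX γ hγ α hα β hβ Sw hSw
end
end

section
/- Under the core contextual dataset model, suppose the first two gradient steps ŵ_1, q̂_1 satisfy: (i) ‖ŵ_1‖ ≤ c_η·ζW/Q² for a constant c_η > 0; and (ii) for some ε > 0 there exists δ (independent of ε) with P( ‖Xᵀφ(X·q̂_1) − (q★ + y·w★)‖ ≤ ε ) ≥ 1 − δ for a fresh sample (X, y). Let the third gradient step be ŵ_2 = η·Ĝ_w(q̂_1, ŵ_1) computed on a fresh batch of n samples. Then there are absolute constants c, C > 0 such that, for all sufficiently small ε and c_η, with probability at least 1 − nδ − 2e^{−cn}, ŵ_2ᵀw★ / ‖ŵ_2‖ ≥ C·W²/Q. -/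
open MeasureTheory ProbabilityTheory Finset Filter

noncomputable section

/-- Attention feature map `Xᵀ φ(X q) = Σ_t φ(Xq)_t x_t`. -/
def attnFeature {T d : ℕ} (q : E d) (X : Fin T → E d) : E d :=
  ∑ t, softmax (fun s => ip (X s) q) t • X t

/-- A family, indexed by `ι`, of i.i.d. samples from the core contextual dataset model
with label `y = ±1` uniform, relevance sets of size `ζT`, and i.i.d. centered
`σ`-subGaussian noise tokens with symmetric law and zero third moment. -/
structure CoreSamples (T d : ℕ) (ζ σ : ℝ) (qs ws : E d)
    {Ω : Type} [MeasurableSpace Ω] (μ : Measure Ω) (ι : Type) where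
  /-- labels -/
  yv : ι → Ω → ℝ
  /-- noise tokens -/
  z : ι → Fin T → Ω → E d
  /-- relevance sets -/
  Rset : ι → Finset (Fin T)
  hRcard : ∀ i, ((Rset i).card : ℝ) = ζ * T
  hy_meas : ∀ i, Measurable (yv i)
  hz_meas : ∀ i t, Measurable (z i t)
  hy_one : ∀ i, μ {ω | yv i ω = 1} = 1 / 2
  hy_mone : ∀ i, μ {ω | yv i ω = -1} = 1 / 2
  indep : iIndepFun
    (fun i ω => (yv i ω, fun t => z i t ω)) μ
  hyz : ∀ i, IndepFun (yv i) (fun ω t => z i t ω) μ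
  hz_indep : ∀ i, iIndepFun (fun t ω => z i t ω) μ
  hz_mean : ∀ i t, ∫ ω, z i t ω ∂μ = 0
  hz_subg : ∀ i t (v : E d) (s : ℝ),
    ∫ ω, Real.exp (s * ip (z i t ω) v) ∂μ ≤ Real.exp (σ ^ 2 * s ^ 2 * ‖v‖ ^ 2 / 2)
  hz_symm : ∀ i t, Measure.map (fun ω => z i t ω) μ = Measure.map (fun ω => -(z i t ω)) μ
  hz_third : ∀ i t (a b c : E d),
    ∫ ω, ip (z i t ω) a * ip (z i t ω) b * ip (z i t ω) c ∂μ = 0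
  hsample_id : ∀ i j, Measure.map (fun ω => (yv i ω, fun t => z i t ω)) μ
      = Measure.map (fun ω => (yv j ω, fun t => z j t ω)) μ
  hz_id : ∀ i t j s, Measure.map (z i t) μ = Measure.map (z j s) μ

/-- The token matrix of the `i`-th sample (core model: `δ = (0,0)`). -/
def sampleX {T d : ℕ} {ζ σ : ℝ} {qs ws : E d} {Ω : Type} [MeasurableSpace Ω]
    {μ : Measure Ω} {ι : Type} (M : CoreSamples T d ζ σ qs ws μ ι) (i : ι) (ω : Ω) :
    Fin T → E d :=
  tokens (M.Rset i) qs ws (M.yv i ω) 0 0 fun t => M.z i t ω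

/-- Negative empirical head-gradient `Ĝ_w(q, w) = -∇_w L̂(w, q)`. -/
def GwHat {T d n : ℕ} {ζ σ : ℝ} {qs ws : E d} {Ω : Type} [MeasurableSpace Ω]
    {μ : Measure Ω} (M : CoreSamples T d ζ σ qs ws μ (Fin n)) (q w : E d) (ω : Ω) :
    E d :=
  -gradient (fun w' => Lhat (fun i => M.yv i ω) (fun i => sampleX M i ω) w' q) w

/-- Negative empirical prompt-gradient `Ĝ_q(q, w) = -∇_q L̂(w, q)`. -/
def GqHat {T d n : ℕ} {ζ σ : ℝ} {qs ws : E d} {Ω : Type} [MeasurableSpace Ω]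
    {μ : Measure Ω} (M : CoreSamples T d ζ σ qs ws μ (Fin n)) (q w : E d) (ω : Ω) :
    E d :=
  -gradient (fun q' => Lhat (fun i => M.yv i ω) (fun i => sampleX M i ω) w q') q

/-- Negative empirical head-gradient as a function of raw data. -/
def GwHatRaw {T d n : ℕ} (yv : Fin n → ℝ) (X : Fin n → Fin T → E d) (q w : E d) :
    E d :=
  -gradient (fun w' => Lhat yv X w' q) w

/-- Negative empirical prompt-gradient as a function of raw data. -/
def GqHatRaw {T d n : ℕ} (yv : Fin n → ℝ) (X : Fin n → Fin T → E d) (q w : E d) :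
    E d :=
  -gradient (fun q' => Lhat yv X w q') q

/-!
Outside an event of probability at most `nδ + 2e^{-n/32}` (a union bound over the samples, and
Hoeffding for the Rademacher labels), every attention feature `aᵢ = Xᵢᵀφ(Xᵢq̂₁)` is `ε`-close to
its signal token `q★ + yᵢw★` and the labels are balanced, `|∑ yᵢ| < n/4`. On this event the
bound is deterministic: `Ĝ_w = n⁻¹ ∑ (yᵢ - ⟪aᵢ, ŵ₁⟫) aᵢ`, and since `ŵ₁` is tiny every residual
is `yᵢ` up to `3/100`, so `⟪w★, (yᵢ - ⟪aᵢ, ŵ₁⟫) aᵢ⟫ ≥ 9/10 W² + yᵢ⟪w★, q★⟫`. Averaging, label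
balance and `|⟪q★, w★⟫| ≤ W²` give `⟪w★, Ĝ_w⟫ ≥ W²/2`, while `‖Ĝ_w‖ ≤ 4Q`.
-/

open RealInnerProductSpace

section InnerProductSpace

variable {F : Type*} [NormedAddCommGroup F] [InnerProductSpace ℝ F]

theorem hasGradientAt_half_mean_sq_residual [CompleteSpace F] {n : ℕ} (y : Fin n → ℝ)
    (a : Fin n → F) (w : F) :
    HasGradientAt (fun w' => 1 / (2 * (n : ℝ)) * ∑ i, (y i - ⟪a i, w'⟫) ^ 2)
      (-((n : ℝ)⁻¹ • ∑ i, (y i - ⟪a i, w⟫) • a i)) w := by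
  have hderiv : HasFDerivAt (fun w' => 1 / (2 * (n : ℝ)) * ∑ i, (y i - ⟪a i, w'⟫) ^ 2)
      ((1 / (2 * (n : ℝ))) • ∑ i, (2 * (y i - ⟪a i, w⟫)) • -innerSL ℝ (a i)) w := by
    refine .const_mul (.fun_sum fun i _ => ?_) _
    have hres : HasFDerivAt (fun w' => y i - ⟪a i, w'⟫) (-innerSL ℝ (a i)) w := by
      simpa using (hasFDerivAt_const (y i) w).fun_sub (innerSL ℝ (a i)).hasFDerivAt
    simpa [pow_two, two_mul, add_smul] using hres.fun_mul hres
  have hdual : InnerProductSpace.toDual ℝ F (-((n : ℝ)⁻¹ • ∑ i, (y i - ⟪a i, w⟫) • a i)) =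
      (1 / (2 * (n : ℝ))) • ∑ i, (2 * (y i - ⟪a i, w⟫)) • -innerSL ℝ (a i) := by
    ext v
    simp only [InnerProductSpace.toDual_apply_apply, smul_apply, _root_.sum_apply, neg_apply,
      innerSL_apply_apply, inner_neg_left, real_inner_smul_left, sum_inner, smul_eq_mul,
      Finset.mul_sum, ← Finset.sum_neg_distrib]
    refine Finset.sum_congr rfl fun i _ => ?_
    ring
  rw [hasGradientAt_iff_hasFDerivAt, hdual]
  exact hderiv

theorem inner_smul_div_norm_smul (v g : F) {η : ℝ} (hη : 0 < η) :
    ⟪v, η • g⟫ / ‖η • g‖ = ⟪v, g⟫ / ‖g‖ := by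
  rw [real_inner_smul_right, norm_smul, Real.norm_eq_abs, abs_of_pos hη,
    mul_div_mul_left _ _ hη.ne']

theorem div_le_inner_div_norm {v g : F} {α β : ℝ} (hα : 0 < α) (hαg : α ≤ ⟪v, g⟫)
    (hgβ : ‖g‖ ≤ β) : α / β ≤ ⟪v, g⟫ / ‖g‖ := by
  have hg : 0 < ‖g‖ := norm_pos_iff.2 fun h => by simp [h] at hαg; linarith
  exact div_le_div₀ (hα.le.trans hαg) hαg hg hgβ

theorem norm_smul_sum_le {n : ℕ} (hn : 0 < n) {t : Fin n → F} {β : ℝ} (ht : ∀ i, ‖t i‖ ≤ β) :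
    ‖(n : ℝ)⁻¹ • ∑ i, t i‖ ≤ β := by
  have hn' : (0 : ℝ) < n := by exact_mod_cast hn
  calc ‖(n : ℝ)⁻¹ • ∑ i, t i‖ ≤ (n : ℝ)⁻¹ * ∑ _i : Fin n, β := by
        rw [norm_smul, norm_inv, Real.norm_natCast]
        gcongr
        exact (norm_sum_le _ _).trans (Finset.sum_le_sum fun i _ => ht i)
    _ = β := by simp [field]

theorem abs_inner_le_sq_norm_of_abs_corr_le {qs ws : F} (hq : 0 < ‖qs‖) (hw : 0 < ‖ws‖)
    (hρ : |⟪qs, ws⟫ / (‖qs‖ * ‖ws‖)| ≤ ‖ws‖ / ‖qs‖) : |⟪qs, ws⟫| ≤ ‖ws‖ ^ 2 := by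
  rw [abs_div, abs_of_pos (mul_pos hq hw), div_le_div_iff₀ (mul_pos hq hw) hq] at hρ
  nlinarith

section Sample

variable {qs ws a : F} {y ε : ℝ}

theorem norm_le_of_norm_sub_signal_le (hy : |y| = 1) (ha : ‖a - (qs + y • ws)‖ ≤ ε) :
    ‖a‖ ≤ ‖qs‖ + ‖ws‖ + ε := by
  have hsignal : ‖qs + y • ws‖ ≤ ‖qs‖ + ‖ws‖ := by
    simpa [norm_smul, hy] using norm_add_le qs (y • ws)
  linarith [norm_le_norm_add_norm_sub' a (qs + y • ws)]

theorem inner_signal_residual_smul_ge {w : F} (hy : |y| = 1)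
    (ha : ‖a - (qs + y • ws)‖ ≤ ε) (hε : ε ≤ ‖ws‖ / 100) (hqw : |⟪qs, ws⟫| ≤ ‖ws‖ ^ 2)
    (haw : |⟪a, w⟫| ≤ 3 / 100) :
    9 / 10 * ‖ws‖ ^ 2 + y * ⟪ws, qs⟫ ≤ ⟪ws, (y - ⟪a, w⟫) • a⟫ := by
  set u := ⟪ws, a - (qs + y • ws)⟫
  have hu : |u| ≤ ‖ws‖ ^ 2 / 100 := by
    have := abs_real_inner_le_norm ws (a - (qs + y • ws))
    nlinarith [norm_nonneg ws]
  have hwa : ⟪ws, a⟫ = ⟪ws, qs⟫ + y * ‖ws‖ ^ 2 + u := by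
    simp only [u, inner_sub_right, inner_add_right, real_inner_smul_right,
      real_inner_self_eq_norm_sq]
    ring
  rw [real_inner_comm ws qs] at hqw
  rw [real_inner_smul_right, hwa]
  rw [abs_le] at hu hqw haw
  rcases (abs_eq zero_le_one).1 hy with rfl | rfl <;> nlinarith

theorem norm_residual_smul_le {w : F} (hy : |y| = 1) (haw : |⟪a, w⟫| ≤ 3 / 100) :
    ‖(y - ⟪a, w⟫) • a‖ ≤ (1 + 3 / 100) * ‖a‖ := by
  rw [norm_smul]
  gcongr
  calc ‖y - ⟪a, w⟫‖ ≤ |y| + |⟪a, w⟫| := abs_sub _ _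
    _ ≤ 1 + 3 / 100 := by rw [hy]; gcongr

theorem abs_inner_le_of_norm_le_three_mul {w : F} {cη ζ : ℝ} (ha : ‖a‖ ≤ 3 * ‖qs‖)
    (hw : ‖w‖ ≤ cη * ζ * ‖ws‖ / ‖qs‖ ^ 2) (hcη : cη ≤ 1 / 100) (hζ0 : 0 ≤ ζ)
    (hζ1 : ζ ≤ 1) (hqs : 0 < ‖qs‖) (hWQ : ‖ws‖ ≤ ‖qs‖) : |⟪a, w⟫| ≤ 3 / 100 := by
  have hWQ' : ‖ws‖ / ‖qs‖ ≤ 1 := (div_le_one hqs).2 hWQ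
  calc |⟪a, w⟫| ≤ ‖a‖ * ‖w‖ := abs_real_inner_le_norm a w
    _ ≤ 3 * ‖qs‖ * (cη * ζ * ‖ws‖ / ‖qs‖ ^ 2) := by gcongr
    _ = 3 * cη * (ζ * (‖ws‖ / ‖qs‖)) := by field_simp
    _ ≤ 3 * (1 / 100) * (1 * 1) := by gcongr
    _ = 3 / 100 := by norm_num

end Sample

theorem half_sq_le_inner_smul_sum {n : ℕ} (hn : 0 < n) {qs ws : F} {y : Fin n → ℝ}
    {t : Fin n → F} (ht : ∀ i, 9 / 10 * ‖ws‖ ^ 2 + y i * ⟪ws, qs⟫ ≤ ⟪ws, t i⟫)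
    (hqw : |⟪qs, ws⟫| ≤ ‖ws‖ ^ 2) (hbal : |∑ i, y i| < n / 4) :
    ‖ws‖ ^ 2 / 2 ≤ ⟪ws, (n : ℝ)⁻¹ • ∑ i, t i⟫ := by
  have hn' : (0 : ℝ) < n := by exact_mod_cast hn
  have hsum : n * (9 / 10 * ‖ws‖ ^ 2) + ⟪ws, qs⟫ * ∑ i, y i ≤ ∑ i, ⟪ws, t i⟫ :=
    calc n * (9 / 10 * ‖ws‖ ^ 2) + ⟪ws, qs⟫ * ∑ i, y i
        = ∑ i, (9 / 10 * ‖ws‖ ^ 2 + y i * ⟪ws, qs⟫) := by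
          simp [Finset.sum_add_distrib, Finset.sum_mul, mul_comm]
      _ ≤ ∑ i, ⟪ws, t i⟫ := Finset.sum_le_sum fun i _ => ht i
  have hcross : |⟪ws, qs⟫ * ∑ i, y i| ≤ ‖ws‖ ^ 2 * (n / 4) := by
    rw [abs_mul, real_inner_comm]
    gcongr
  rw [real_inner_smul_right, inner_sum, le_inv_mul_iff₀ hn']
  linarith [neg_abs_le (⟪ws, qs⟫ * ∑ i, y i), mul_nonneg hn'.le (sq_nonneg ‖ws‖)]

theorem le_inner_div_norm_of_near_signal {n : ℕ} (hn : 0 < n) {qs ws w : F}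
    {y : Fin n → ℝ} {a : Fin n → F} {ε cη ζ : ℝ} (hws : 0 < ‖ws‖) (hWQ : ‖ws‖ < ‖qs‖)
    (hqw : |⟪qs, ws⟫| ≤ ‖ws‖ ^ 2) (hε : ε ≤ ‖ws‖ / 100)
    (hw : ‖w‖ ≤ cη * ζ * ‖ws‖ / ‖qs‖ ^ 2) (hcη : cη ≤ 1 / 100)
    (hζ0 : 0 ≤ ζ) (hζ1 : ζ ≤ 1) (hy : ∀ i, |y i| = 1)
    (ha : ∀ i, ‖a i - (qs + y i • ws)‖ ≤ ε) (hbal : |∑ i, y i| < n / 4) :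
    1 / 8 * ‖ws‖ ^ 2 / ‖qs‖ ≤ ⟪ws, (n : ℝ)⁻¹ • ∑ i, (y i - ⟪a i, w⟫) • a i⟫ /
      ‖(n : ℝ)⁻¹ • ∑ i, (y i - ⟪a i, w⟫) • a i‖ := by
  have hqs : 0 < ‖qs‖ := hws.trans hWQ
  have hnorm (i : Fin n) : ‖a i‖ ≤ 3 * ‖qs‖ := by
    linarith [norm_le_of_norm_sub_signal_le (hy i) (ha i)]
  have haw (i : Fin n) : |⟪a i, w⟫| ≤ 3 / 100 :=
    abs_inner_le_of_norm_le_three_mul (hnorm i) hw hcη hζ0 hζ1 hqs hWQ.le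
  calc 1 / 8 * ‖ws‖ ^ 2 / ‖qs‖ = (‖ws‖ ^ 2 / 2) / (4 * ‖qs‖) := by ring
    _ ≤ _ := div_le_inner_div_norm (by positivity)
      (half_sq_le_inner_smul_sum hn
        (fun i => inner_signal_residual_smul_ge (hy i) (ha i) hε hqw (haw i)) hqw hbal)
      (norm_smul_sum_le hn fun i => (norm_residual_smul_le (hy i) (haw i)).trans
        (by linarith [hnorm i]))

end InnerProductSpace

section Probability

open scoped NNReal

variable {Ω : Type*} [MeasurableSpace Ω] {μ : Measure Ω} [IsProbabilityMeasure μ]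

theorem ofReal_one_sub_le_measure_of_ae {ι : Type*} [Fintype ι] {A : ι → Set Ω} {B S : Set Ω}
    {δ β : ℝ} (hA_meas : ∀ i, MeasurableSet (A i)) (hA : ∀ i, ENNReal.ofReal (1 - δ) ≤ μ (A i))
    (hB : μ.real B ≤ β) (hS : ∀ᵐ ω ∂μ, (∀ i, ω ∈ A i) → ω ∉ B → ω ∈ S) :
    ENNReal.ofReal (1 - Fintype.card ι * δ - β) ≤ μ S := by
  have hAc (i : ι) : μ.real (A i)ᶜ ≤ δ := by
    have h := (ENNReal.ofReal_le_iff_le_toReal (measure_ne_top μ _)).1 (hA i)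
    rw [← measureReal_def] at h
    rw [probReal_compl_eq_one_sub (hA_meas i)]
    linarith
  have hSc_sub : (Sᶜ : Set Ω) ≤ᵐ[μ] ((⋃ i, (A i)ᶜ) ∪ B : Set Ω) := hS.mono fun ω hω => by
    change ω ∈ Sᶜ → ω ∈ (⋃ i, (A i)ᶜ) ∪ B
    intro hωS
    by_contra hbad
    simp only [Set.mem_union, Set.mem_iUnion, Set.mem_compl_iff, not_or, not_exists,
      not_not] at hbad
    exact hωS (hω hbad.1 hbad.2)
  have hSc : μ.real Sᶜ ≤ Fintype.card ι * δ + β :=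
    calc μ.real Sᶜ ≤ μ.real ((⋃ i, (A i)ᶜ) ∪ B) :=
          ENNReal.toReal_mono (measure_ne_top μ _) (measure_mono_ae hSc_sub)
      _ ≤ ∑ i, μ.real (A i)ᶜ + μ.real B :=
          (measureReal_union_le _ _).trans (by gcongr; exact measureReal_iUnion_fintype_le _)
      _ ≤ Fintype.card ι * δ + β := by
          gcongr
          simpa using Finset.sum_le_sum fun i (_ : i ∈ Finset.univ) => hAc i
  have hcover : 1 ≤ μ.real S + μ.real Sᶜ := by
    simpa [Set.union_compl_self] using measureReal_union_le (μ := μ) S Sᶜ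
  rw [← ofReal_measureReal]
  exact ENNReal.ofReal_le_ofReal (by linarith)

theorem ae_eq_one_or_eq_neg_one {y : Ω → ℝ} (hy : Measurable y)
    (h1 : μ {ω | y ω = 1} = 1 / 2) (hm1 : μ {ω | y ω = -1} = 1 / 2) :
    ∀ᵐ ω ∂μ, y ω = 1 ∨ y ω = -1 := by
  have hmeas (r : ℝ) : MeasurableSet {ω | y ω = r} := hy (measurableSet_singleton r)
  rw [ae_iff_measure_eq (p := fun ω => y ω = 1 ∨ y ω = -1), Set.ofPred_or,
    measure_union _ (hmeas (-1)), h1, hm1, ENNReal.add_halves, measure_univ]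
  · exact Set.disjoint_left.2 fun ω (h : y ω = 1) (h' : y ω = -1) => by norm_num [h] at h'
  · rw [Set.ofPred_or]
    exact ((hmeas 1).union (hmeas (-1))).nullMeasurableSet

theorem hasSubgaussianMGF_of_measure_eq_half {y : Ω → ℝ} (hy : Measurable y)
    (h1 : μ {ω | y ω = 1} = 1 / 2) (hm1 : μ {ω | y ω = -1} = 1 / 2) :
    HasSubgaussianMGF y 1 μ := by
  have hae := ae_eq_one_or_eq_neg_one hy h1 hm1
  have hmeas (r : ℝ) : MeasurableSet {ω | y ω = r} := hy (measurableSet_singleton r)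
  have hmean : μ[y] = 0 := by
    have hy_eq : y =ᵐ[μ] fun ω => {ω | y ω = 1}.indicator (fun _ => (1 : ℝ)) ω
        + {ω | y ω = -1}.indicator (fun _ => -1) ω := by
      filter_upwards [hae] with ω h
      rcases h with h | h <;> norm_num [Set.indicator, h]
    rw [integral_congr_ae hy_eq, integral_add ((integrable_const _).indicator (hmeas 1))
      ((integrable_const _).indicator (hmeas (-1))), integral_indicator_const _ (hmeas 1),
      integral_indicator_const _ (hmeas (-1))]
    simp [measureReal_def, h1, hm1]
  have hIcc : ∀ᵐ ω ∂μ, y ω ∈ Set.Icc (-1 : ℝ) 1 := hae.mono fun ω h => by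
    rcases h with h | h <;> simp [h]
  convert hasSubgaussianMGF_of_mem_Icc_of_integral_eq_zero hy.aemeasurable hIcc hmean
  norm_num

theorem measureReal_abs_sum_ge_le_of_iIndepFun {ι : Type*} [Fintype ι] {X : ι → Ω → ℝ}
    {c : ℝ≥0} (h_indep : iIndepFun X μ) (h_subG : ∀ i, HasSubgaussianMGF (X i) c μ) {ε : ℝ}
    (hε : 0 ≤ ε) :
    μ.real {ω | ε ≤ |∑ i, X i ω|} ≤ 2 * Real.exp (-ε ^ 2 / (2 * (Fintype.card ι * c))) := by
  have hupper := HasSubgaussianMGF.measure_sum_ge_le_of_iIndepFun h_indep (s := Finset.univ)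
    (fun i _ => h_subG i) hε
  have hlower := HasSubgaussianMGF.measure_sum_ge_le_of_iIndepFun
    (h_indep.comp (fun _ => Neg.neg) fun _ => measurable_neg) (s := Finset.univ)
    (fun i _ => (h_subG i).neg) hε
  have hsplit : {ω | ε ≤ |∑ i, X i ω|}
      ⊆ {ω | ε ≤ ∑ i, X i ω} ∪ {ω | ε ≤ ∑ i, (Neg.neg ∘ X i) ω} := fun ω hω => by
    simp only [Set.mem_ofPred_eq, Function.comp_apply, Finset.sum_neg_distrib] at hω ⊢
    exact (le_abs'.1 hω).symm.imp id fun h => le_neg_of_le_neg h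
  simp only [Finset.sum_const, Finset.card_univ, nsmul_eq_mul] at hupper hlower
  calc μ.real {ω | ε ≤ |∑ i, X i ω|} ≤ _ := measureReal_mono hsplit
    _ ≤ _ := measureReal_union_le _ _
    _ ≤ _ := add_le_add hupper hlower
    _ = _ := by push_cast; ring

end Probability

theorem promptAtt_eq_inner_attnFeature {T d : ℕ} (w q : E d) (X : Fin T → E d) :
    promptAtt w q X = ⟪attnFeature q X, w⟫ := by
  simp [promptAtt, attnFeature, ip, sum_inner, real_inner_smul_left]

theorem GwHatRaw_eq_smul_sum {T d n : ℕ} (yv : Fin n → ℝ) (X : Fin n → Fin T → E d) (q w : E d) :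
    GwHatRaw yv X q w
      = (n : ℝ)⁻¹ • ∑ i, (yv i - ⟪attnFeature q (X i), w⟫) • attnFeature q (X i) := by
  have hLhat : (fun w' => Lhat yv X w' q)
      = fun w' => 1 / (2 * (n : ℝ)) * ∑ i, (yv i - ⟪attnFeature q (X i), w'⟫) ^ 2 := by
    funext w'
    simp [Lhat, promptAtt_eq_inner_attnFeature]
  rw [GwHatRaw, hLhat, (hasGradientAt_half_mean_sq_residual _ _ w).gradient, neg_neg]

theorem continuous_attnFeature {T d : ℕ} (q : E d) :
    Continuous fun X : Fin T → E d => attnFeature q X := by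
  have hexp (t : Fin T) : Continuous fun X : Fin T → E d => Real.exp (ip (X t) q) :=
    Real.continuous_exp.comp ((continuous_apply t).inner continuous_const)
  refine continuous_finsetSum _ fun t _ => .smul (.div (hexp t)
    (continuous_finsetSum _ fun s _ => hexp s) fun X => ?_) (continuous_apply t)
  exact (Finset.sum_pos (fun s _ => Real.exp_pos _) ⟨t, Finset.mem_univ t⟩).ne'

namespace CoreSamples

variable {T d : ℕ} {ζ σ : ℝ} {qs ws : E d} {Ω : Type} [MeasurableSpace Ω] {μ : Measure Ω}

theorem measurable_sampleX {ι : Type} (M : CoreSamples T d ζ σ qs ws μ ι) (i : ι) :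
    Measurable fun ω => sampleX M i ω := by
  refine measurable_pi_lambda _ fun t => ?_
  by_cases ht : t ∈ M.Rset i
  · simpa [sampleX, tokens, ht] using ((M.hy_meas i).smul_const ws).const_add qs
  · simpa [sampleX, tokens, ht] using M.hz_meas i t

theorem measureReal_abs_sum_yv_ge_le [IsProbabilityMeasure μ] {n : ℕ}
    (M : CoreSamples T d ζ σ qs ws μ (Fin n)) :
    μ.real {ω | (n : ℝ) / 4 ≤ |∑ i, M.yv i ω|} ≤ 2 * Real.exp (-(1 / 32) * n) := by
  have hindep : iIndepFun M.yv μ := M.indep.comp (fun _ => Prod.fst) fun _ => measurable_fst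
  have h := measureReal_abs_sum_ge_le_of_iIndepFun (c := 1) hindep
    (fun i => hasSubgaussianMGF_of_measure_eq_half (M.hy_meas i) (M.hy_one i) (M.hy_mone i))
    (by positivity : (0 : ℝ) ≤ n / 4)
  convert h using 3
  rcases Nat.eq_zero_or_pos n with rfl | hn
  · simp
  · push_cast [Fintype.card_fin]
    field_simp
    ring

end CoreSamples

/-- Lemma: the third gradient step has positive correlation with
`w★`.  Given the first two steps `ŵ₁, q̂₁` with `‖ŵ₁‖ ≤ c_η ζW/Q²` and attention
features `ε`-close to the signal token with probability `1 - δ`, the third step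
`ŵ₂ = η Ĝ_w(q̂₁, ŵ₁)` on a fresh batch satisfies `ŵ₂ᵀw★/‖ŵ₂‖ ≥ C·W²/Q` with
probability at least `1 - nδ - 2e^{-cn}`. -/
theorem third_gradient_step :
    ∀ wlo : ℝ, 0 < wlo →
    ∃ c C εstar cηstar : ℝ, 0 < c ∧ 0 < C ∧ 0 < εstar ∧ 0 < cηstar ∧
      ∀ (T d n : ℕ), 0 < T → 0 < n →
      ∀ (ζ σ : ℝ), 0 < ζ → ζ < 1 → 0 < σ →
      ∀ (qs ws : E d) (W Q ρ : ℝ), W = ‖ws‖ → Q = ‖qs‖ → ρ = ip qs ws / (Q * W) →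
        wlo ≤ W → W < Q → |ρ| ≤ W / Q →
      ∀ (Ω : Type) (mΩ : MeasurableSpace Ω) (μ : Measure Ω), IsProbabilityMeasure μ →
      ∀ (M : CoreSamples T d ζ σ qs ws μ (Fin n)),
      ∀ ε : ℝ, 0 < ε → ε ≤ εstar →
      ∀ cη : ℝ, 0 < cη → cη ≤ cηstar →
      ∀ δ : ℝ, 0 ≤ δ →
      ∀ w1 q1 : E d,
        ‖w1‖ ≤ cη * ζ * W / Q ^ 2 →
        (∀ i, ENNReal.ofReal (1 - δ) ≤
          μ {ω | ‖attnFeature q1 (sampleX M i ω) - (qs + M.yv i ω • ws)‖ ≤ ε}) →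
      ∀ η : ℝ, 0 < η →
        ENNReal.ofReal (1 - n * δ - 2 * Real.exp (-c * n)) ≤
          μ {ω | C * W ^ 2 / Q ≤
              ip ws (η • GwHatRaw (fun i => M.yv i ω) (fun i => sampleX M i ω) q1 w1) /
                ‖η • GwHatRaw (fun i => M.yv i ω) (fun i => sampleX M i ω) q1 w1‖} := by
  intro wlo hwlo
  refine ⟨1 / 32, 1 / 8, wlo / 100, 1 / 100, by norm_num, by norm_num, by positivity,
    by norm_num, ?_⟩
  rintro T d n - hn ζ σ hζ hζ1 - qs ws W Q ρ rfl rfl rfl hwloW hWQ hρ Ω mΩ μ hμ M ε - hε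
    cη - hcη δ - w1 q1 hw1 hnear η hη
  have hws : 0 < ‖ws‖ := hwlo.trans_le hwloW
  have hqw := abs_inner_le_sq_norm_of_abs_corr_le (hws.trans hWQ) hws hρ
  have hnear_meas (i : Fin n) : MeasurableSet
      {ω | ‖attnFeature q1 (sampleX M i ω) - (qs + M.yv i ω • ws)‖ ≤ ε} :=
    measurableSet_le ((((continuous_attnFeature q1).measurable.comp (M.measurable_sampleX i)).sub
      (((M.hy_meas i).smul_const ws).const_add qs)).norm) measurable_const
  refine le_trans (le_of_eq (by rw [Fintype.card_fin])) (ofReal_one_sub_le_measure_of_ae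
    hnear_meas hnear M.measureReal_abs_sum_yv_ge_le ?_)
  filter_upwards [ae_all_iff.2 fun i => ae_eq_one_or_eq_neg_one (M.hy_meas i) (M.hy_one i)
    (M.hy_mone i)] with ω hy hnear_ω hbal
  rw [GwHatRaw_eq_smul_sum, ip, inner_smul_div_norm_smul _ _ hη]
  exact le_inner_div_norm_of_near_signal hn hws hWQ hqw (by linarith) hw1 hcη hζ.le hζ1.le
    (fun i => by rcases hy i with h | h <;> simp [h]) hnear_ω (not_le.1 hbal)
end
end
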